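/- arXiv:1103.2810 — 4 statements merged into one kernel-verified Lean document; each statement's English description precedes it below -/
import Mathlib

section
/- Let G be a distance-regular graph with diameter D and let u, v be adjacent vertices of G. Define f on the vertex set of G by: f(z) = φ_i if d(v,z) = i and d(u,z) = i+1; f(z) = −φ_i if d(u,z) = i and d(v,z) = i+1; f(z) = 0 if d(u,z) = d(v,z). (In particular f(u) = φ_0 and f(v) = −φ_0.) Then f is harmonic at every vertex z distinct from u and v, i.e., Σ_{x ∼ z} (f(x) − f(z)) = 0 for all z ∉ {u, v}. -/
open Finset

/-- `G` is a distance-regular graph with diameter `D` and intersection numbers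
`b i` and `c i`: for all vertices `x, y` at distance `i ≤ D`, `y` has exactly `c i`
neighbors at distance `i - 1` from `x` and exactly `b i` neighbors at distance
`i + 1` from `x`. -/
structure SimpleGraph.IsDRG {V : Type*} [Fintype V] [DecidableEq V] (G : SimpleGraph V)
    [DecidableRel G.Adj] (D : ℕ) (b c : ℕ → ℕ) : Prop where
  connected : G.Connected
  dist_le : ∀ x y : V, G.dist x y ≤ D
  exists_dist_eq : ∃ x y : V, G.dist x y = D
  card_c : ∀ i, i ≤ D → ∀ x y : V, G.dist x y = i →
    ((G.neighborFinset y).filter fun z => G.dist x z + 1 = i).card = c i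
  card_b : ∀ i, i ≤ D → ∀ x y : V, G.dist x y = i →
    ((G.neighborFinset y).filter fun z => G.dist x z = i + 1).card = b i

/-- The potentials `φ i` of a distance-regular graph with `n` vertices, diameter `D`,
valency `k` and intersection numbers `b`, `c` : `φ 0 = n - 1`,
`φ i = (c i * φ (i-1) - k) / b i` for `1 ≤ i ≤ D - 1`, and `φ i = 0` for `i ≥ D`. -/
def drgPhi (n D k : ℕ) (b c : ℕ → ℕ) : ℕ → ℚ
  | 0 => (n : ℚ) - 1
  | i + 1 =>
    if i + 1 < D then ((c (i + 1) : ℚ) * drgPhi n D k b c i - (k : ℚ)) / (b (i + 1) : ℚ)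
    else 0

/-!
Write `f = h_u - h_v` with `h_w z = ∑_{j < d(w,z)} φ_j`. For `z` at distance `i + 1` from `w`,
the intersection numbers give `∑_{x ∼ z} (h_w x - h_w z) = b_{i+1} φ_{i+1} - c_{i+1} φ_i`, which
the recursion for `φ` turns into `-k` when `i + 1 < D`; so for `z ∉ {u, v}` the sums for `h_u`
and `h_v` cancel. The remaining case `c_D φ_{D-1} = k` comes from summing over all `z`: the total
is `0`, the term at `z = w` is `k φ_0 = k (n - 1)` and every other term off the sphere of radius
`D` is `-k`, leaving `k_D (k - c_D φ_{D-1}) = 0` with `k_D ≠ 0` vertices on that sphere.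
-/

namespace SimpleGraph

variable {V : Type*} {G : SimpleGraph V}

theorem Connected.exists_adj_dist_add_one_eq (hG : G.Connected) {x y : V} (hxy : x ≠ y) :
    ∃ w, G.Adj w y ∧ G.dist x w + 1 = G.dist x y := by
  obtain ⟨p, hp⟩ := (hG y x).exists_walk_length_eq_dist
  cases p with
  | nil => exact absurd rfl hxy
  | cons hadj q =>
    refine ⟨_, hadj.symm, ?_⟩
    have hq : G.dist _ x ≤ q.length := dist_le q
    have := hadj.symm.diff_dist_adj (u := x)
    rw [Walk.length_cons, dist_comm] at hp
    rw [dist_comm] at hq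
    omega

theorem sum_sum_neighborFinset_sub_eq_zero [Fintype V] [DecidableRel G.Adj] {M : Type*}
    [AddCommGroup M] (h : V → M) : ∑ z, ∑ x ∈ G.neighborFinset z, (h x - h z) = 0 := by
  simp only [Finset.sum_sub_distrib, sub_eq_zero]
  exact Finset.sum_comm' fun z x => by simp [adj_comm]

noncomputable def distPotential (G : SimpleGraph V) (φ : ℕ → ℚ) (w z : V) : ℚ :=
  ∑ j ∈ range (G.dist w z), φ j

theorem Adj.eq_distPotential_sub {u v : V} (huv : G.Adj u v) {φ : ℕ → ℚ} {f : V → ℚ}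
    (hf_pos : ∀ (z : V) (i : ℕ), G.dist v z = i → G.dist u z = i + 1 → f z = φ i)
    (hf_neg : ∀ (z : V) (i : ℕ), G.dist u z = i → G.dist v z = i + 1 → f z = -φ i)
    (hf_zero : ∀ z : V, G.dist u z = G.dist v z → f z = 0) (z : V) :
    f z = G.distPotential φ u z - G.distPotential φ v z := by
  have hdist := huv.diff_dist_adj (u := z)
  rw [G.dist_comm, G.dist_comm (u := z)] at hdist
  unfold distPotential
  rcases hdist with h | h | h
  · rw [hf_zero z h.symm, h, sub_self]
  · rw [hf_neg z _ rfl h, h, Finset.sum_range_succ]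
    ring
  · rcases hu : G.dist u z with _ | i
    · rw [hf_zero z (by omega), show G.dist v z = 0 by omega, sub_self]
    · rw [hu, Nat.add_sub_cancel] at h
      rw [hf_pos z i h hu, h, Finset.sum_range_succ]
      ring

end SimpleGraph

section drgPhi

variable {n D k : ℕ} {b c : ℕ → ℕ}

theorem drgPhi_succ_of_le {i : ℕ} (hi : D ≤ i + 1) : drgPhi n D k b c (i + 1) = 0 := by
  simp [drgPhi, Nat.not_lt.mpr hi]

theorem c_mul_drgPhi_sub_b_mul_drgPhi_succ {i : ℕ} (hi : i + 1 < D) (hb : b (i + 1) ≠ 0) :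
    c (i + 1) * drgPhi n D k b c i - b (i + 1) * drgPhi n D k b c (i + 1) = k := by
  rw [drgPhi, if_pos hi, mul_div_cancel₀ _ (Nat.cast_ne_zero.mpr hb)]
  ring

end drgPhi

namespace SimpleGraph.IsDRG

variable {V : Type*} [Fintype V] [DecidableEq V] {G : SimpleGraph V} [DecidableRel G.Adj]
  {D : ℕ} {b c : ℕ → ℕ}

theorem exists_dist_eq_of_le (hG : G.IsDRG D b c) {m : ℕ} (hm : m ≤ D) :
    ∃ x y : V, G.dist x y = m := by
  obtain ⟨x, y, hxy⟩ := hG.exists_dist_eq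
  suffices h : ∀ j ≤ D, ∃ w, G.dist x w = D - j by
    obtain ⟨w, hw⟩ := h (D - m) (Nat.sub_le D m)
    exact ⟨x, w, by omega⟩
  intro j hj
  induction j with
  | zero => exact ⟨y, hxy⟩
  | succ j ih =>
    obtain ⟨w, hw⟩ := ih (by omega)
    have hxw : x ≠ w := by
      rintro rfl
      rw [dist_self] at hw
      omega
    obtain ⟨w', -, hw'⟩ := hG.connected.exists_adj_dist_add_one_eq hxw
    exact ⟨w', by omega⟩

theorem b_ne_zero (hG : G.IsDRG D b c) {i : ℕ} (hi : i < D) : b i ≠ 0 := by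
  obtain ⟨x, y, hxy⟩ := hG.exists_dist_eq_of_le hi
  have hxy' : x ≠ y := by
    rintro rfl
    rw [dist_self] at hxy
    omega
  obtain ⟨w, hadj, hw⟩ := hG.connected.exists_adj_dist_add_one_eq hxy'
  rw [← hG.card_b i hi.le x w (by omega)]
  exact Finset.card_ne_zero_of_mem
    (Finset.mem_filter.mpr ⟨(mem_neighborFinset _ _ _).mpr hadj, hxy⟩)

theorem sum_neighborFinset_sub (hG : G.IsDRG D b c) {M : Type*} [AddCommGroup M] (F : ℕ → M)
    (w z : V) :
    ∑ x ∈ G.neighborFinset z, (F (G.dist w x) - F (G.dist w z))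
      = c (G.dist w z) • (F (G.dist w z - 1) - F (G.dist w z))
        + b (G.dist w z) • (F (G.dist w z + 1) - F (G.dist w z)) := by
  have hterm : ∀ x ∈ G.neighborFinset z, F (G.dist w x) - F (G.dist w z)
      = (if G.dist w x + 1 = G.dist w z then F (G.dist w z - 1) - F (G.dist w z) else 0)
        + (if G.dist w x = G.dist w z + 1 then F (G.dist w z + 1) - F (G.dist w z) else 0) := by
    intro x hx
    rcases ((mem_neighborFinset _ _ _).mp hx).diff_dist_adj (u := w) with h | h | h <;>
      rw [h] <;> rcases G.dist w z with _ | i <;> simp <;> omega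
  have hi : G.dist w z ≤ D := hG.dist_le w z
  rw [Finset.sum_congr rfl hterm, Finset.sum_add_distrib, ← Finset.sum_filter,
    ← Finset.sum_filter, Finset.sum_const, Finset.sum_const, hG.card_c _ hi w z rfl,
    hG.card_b _ hi w z rfl]

theorem sum_neighborFinset_distPotential_sub_self (hG : G.IsDRG D b c) (φ : ℕ → ℚ) (w : V) :
    ∑ x ∈ G.neighborFinset w, (G.distPotential φ w x - G.distPotential φ w w)
      = b 0 * φ 0 := by
  unfold distPotential
  rw [hG.sum_neighborFinset_sub (fun i => ∑ j ∈ range i, φ j), dist_self]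
  simp

theorem sum_neighborFinset_distPotential_sub_of_dist_eq (hG : G.IsDRG D b c) (φ : ℕ → ℚ)
    {w z : V} {i : ℕ} (h : G.dist w z = i + 1) :
    ∑ x ∈ G.neighborFinset z, (G.distPotential φ w x - G.distPotential φ w z)
      = b (i + 1) * φ (i + 1) - c (i + 1) * φ i := by
  unfold distPotential
  rw [hG.sum_neighborFinset_sub (fun i => ∑ j ∈ range i, φ j), h, Nat.add_sub_cancel]
  simp only [Finset.sum_range_succ, nsmul_eq_mul]
  ring

local notation "φ" => drgPhi (Fintype.card V) D (b 0) b c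

theorem c_mul_drgPhi_of_succ_eq (hG : G.IsDRG D b c) {i : ℕ} (hi : i + 1 = D) :
    c (i + 1) * φ i = b 0 := by
  obtain ⟨w, y, hwy⟩ := hG.exists_dist_eq
  have hlap : ∀ z, ∑ x ∈ G.neighborFinset z, (G.distPotential φ w x - G.distPotential φ w z)
      = (if z = w then (Fintype.card V * b 0 : ℚ) else 0) - b 0
        + (if G.dist w z = D then b 0 - c (i + 1) * φ i else 0) := by
    intro z
    rcases eq_or_ne z w with rfl | hzw
    · rw [hG.sum_neighborFinset_distPotential_sub_self, dist_self, if_pos rfl, if_neg (by omega)]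
      simp only [drgPhi]
      ring
    obtain ⟨j, hj⟩ : ∃ j, G.dist w z = j + 1 :=
      Nat.exists_eq_succ_of_ne_zero (by simpa [hG.connected.dist_eq_zero_iff] using hzw.symm)
    rw [hG.sum_neighborFinset_distPotential_sub_of_dist_eq φ hj, if_neg hzw, hj]
    rcases (hj ▸ hG.dist_le w z).lt_or_eq with hjD | rfl
    · rw [if_neg hjD.ne]
      linear_combination -c_mul_drgPhi_sub_b_mul_drgPhi_succ (n := Fintype.card V) (k := b 0)
        (c := c) hjD (hG.b_ne_zero hjD)
    · obtain rfl : j = i := by omega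
      rw [if_pos rfl, drgPhi_succ_of_le le_rfl]
      ring
  have hsum := G.sum_sum_neighborFinset_sub_eq_zero (G.distPotential φ w)
  simp only [hlap, Finset.sum_add_distrib, Finset.sum_sub_distrib, Finset.sum_ite_eq',
    Finset.mem_univ, if_true, ← Finset.sum_filter, Finset.sum_const, Finset.card_univ,
    nsmul_eq_mul] at hsum
  have hcard : ((univ.filter fun z => G.dist w z = D).card : ℚ) ≠ 0 :=
    Nat.cast_ne_zero.mpr (Finset.card_ne_zero_of_mem (by simpa using hwy))
  have hprod :
      ((univ.filter fun z => G.dist w z = D).card : ℚ) * (b 0 - c (i + 1) * φ i) = 0 := by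
    linear_combination hsum
  linear_combination -(mul_eq_zero.mp hprod).resolve_left hcard

theorem c_mul_drgPhi_sub_b_mul_drgPhi (hG : G.IsDRG D b c) {i : ℕ} (hi : i + 1 ≤ D) :
    c (i + 1) * φ i - b (i + 1) * φ (i + 1) = b 0 := by
  rcases hi.lt_or_eq with hi | hi
  · exact c_mul_drgPhi_sub_b_mul_drgPhi_succ hi (hG.b_ne_zero hi)
  · rw [drgPhi_succ_of_le hi.ge, mul_zero, sub_zero, hG.c_mul_drgPhi_of_succ_eq hi]

theorem sum_neighborFinset_distPotential_drgPhi_sub (hG : G.IsDRG D b c) {w z : V}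
    (hzw : z ≠ w) :
    ∑ x ∈ G.neighborFinset z, (G.distPotential φ w x - G.distPotential φ w z) = -b 0 := by
  obtain ⟨i, hi⟩ : ∃ i, G.dist w z = i + 1 :=
    Nat.exists_eq_succ_of_ne_zero (by simpa [hG.connected.dist_eq_zero_iff] using hzw.symm)
  rw [hG.sum_neighborFinset_distPotential_sub_of_dist_eq φ hi,
    ← hG.c_mul_drgPhi_sub_b_mul_drgPhi (hi ▸ hG.dist_le w z)]
  ring

end SimpleGraph.IsDRG

theorem drg_potential_harmonic {V : Type*} [Fintype V] [DecidableEq V] (G : SimpleGraph V) [DecidableRel G.Adj]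
    (D : ℕ) (b c : ℕ → ℕ) (hG : G.IsDRG D b c)
    (u v : V) (huv : G.Adj u v) (f : V → ℚ)
    (hf_pos : ∀ (z : V) (i : ℕ), G.dist v z = i → G.dist u z = i + 1 → f z = drgPhi (Fintype.card V) D (b 0) b c i)
    (hf_neg : ∀ (z : V) (i : ℕ), G.dist u z = i → G.dist v z = i + 1 → f z = -(drgPhi (Fintype.card V) D (b 0) b c i))
    (hf_zero : ∀ z : V, G.dist u z = G.dist v z → f z = 0) :
    ∀ z : V, z ≠ u → z ≠ v → ∑ x ∈ G.neighborFinset z, (f x - f z) = 0 := by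
  intro z hzu hzv
  set h := G.distPotential (drgPhi (Fintype.card V) D (b 0) b c)
  have hf : ∀ x, f x = h u x - h v x := huv.eq_distPotential_sub hf_pos hf_neg hf_zero
  calc ∑ x ∈ G.neighborFinset z, (f x - f z)
      = ∑ x ∈ G.neighborFinset z, (h u x - h u z)
          - ∑ x ∈ G.neighborFinset z, (h v x - h v z) := by
        rw [← Finset.sum_sub_distrib]
        exact Finset.sum_congr rfl fun x _ => by rw [hf x, hf z]; ring
    _ = 0 := by
        rw [hG.sum_neighborFinset_distPotential_drgPhi_sub hzu,
          hG.sum_neighborFinset_distPotential_drgPhi_sub hzv, sub_self]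
end

section
/- Let G be a distance-regular graph with valency k ≥ 3 and diameter D. Let j = min{i ≥ 1 : c_i ≥ b_i} and h = min{i ≥ 1 : c_i > b_i} (both exist since c_D ≥ 1 > 0 = b_D). Then D − h ≤ j − 1, i.e., D ≤ h + j − 1. -/
open Finset

section Aux

variable {V : Type*} [Fintype V] [DecidableEq V] {G : SimpleGraph V} [DecidableRel G.Adj]

/-- Along any walk, vertices `i` and `m` apart are at distance at most `m - i`. -/
lemma aux_walk_dist_le (hc : G.Connected) {x y : V} (p : G.Walk x y) :
    ∀ i m : ℕ, i ≤ m → G.dist (p.getVert i) (p.getVert m) ≤ m - i := by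
  induction p with
  | nil =>
    intro i m _
    rw [SimpleGraph.Walk.getVert_of_length_le _ (by simp),
      SimpleGraph.Walk.getVert_of_length_le _ (by simp), SimpleGraph.dist_self]
    exact Nat.zero_le _
  | cons hadj q ih =>
    rename_i u v w
    intro i m him
    match i, m with
    | 0, 0 => simp
    | 0, (m' + 1) =>
      rw [SimpleGraph.Walk.getVert_zero, SimpleGraph.Walk.getVert_cons_succ]
      have ht : G.dist u (q.getVert m') ≤ G.dist u v + G.dist v (q.getVert m') :=
        hc.dist_triangle
      have h1 : G.dist u v = 1 := SimpleGraph.dist_eq_one_iff_adj.mpr hadj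
      have h2 : G.dist v (q.getVert m') ≤ m' - 0 := by
        have := ih 0 m' (Nat.zero_le _)
        rwa [SimpleGraph.Walk.getVert_zero] at this
      omega
    | (i' + 1), (m' + 1) =>
      rw [SimpleGraph.Walk.getVert_cons_succ, SimpleGraph.Walk.getVert_cons_succ]
      have := ih i' m' (by omega)
      omega

/-- Along a geodesic, vertices `i` and `m` apart are at distance exactly `m - i`. -/
lemma aux_geodesic_dist (hc : G.Connected) {x y : V} (p : G.Walk x y)
    (hp : p.length = G.dist x y) {i m : ℕ} (him : i ≤ m) (hm : m ≤ p.length) :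
    G.dist (p.getVert i) (p.getVert m) = m - i := by
  have hle : G.dist (p.getVert i) (p.getVert m) ≤ m - i := aux_walk_dist_le hc p i m him
  have h1 : G.dist x (p.getVert i) ≤ i := by
    have := aux_walk_dist_le hc p 0 i (Nat.zero_le _)
    rwa [SimpleGraph.Walk.getVert_zero, Nat.sub_zero] at this
  have h2 : G.dist (p.getVert m) y ≤ p.length - m := by
    have := aux_walk_dist_le hc p m p.length hm
    rwa [SimpleGraph.Walk.getVert_length] at this
  have ht1 : G.dist x y ≤ G.dist x (p.getVert m) + G.dist (p.getVert m) y := hc.dist_triangle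
  have ht2 : G.dist x (p.getVert m) ≤ G.dist x (p.getVert i) +
      G.dist (p.getVert i) (p.getVert m) := hc.dist_triangle
  omega

variable {D : ℕ} {b c : ℕ → ℕ}

/-- If `i + i' ≤ D` then `c i ≤ b i'`. -/
lemma aux_c_le_b (hG : G.IsDRG D b c) {i i' : ℕ} (hii : i + i' ≤ D) : c i ≤ b i' := by
  obtain ⟨x0, y0, hxy⟩ := hG.exists_dist_eq
  obtain ⟨p, hp⟩ := hG.connected.exists_walk_length_eq_dist x0 y0
  have hpl : p.length = D := by rw [hp, hxy]
  set z := p.getVert i with hz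
  set y := p.getVert (i + i') with hy
  have dxz : G.dist x0 z = i := by
    have := aux_geodesic_dist hG.connected p hp (Nat.zero_le i) (by omega)
    rwa [SimpleGraph.Walk.getVert_zero, Nat.sub_zero] at this
  have dzy : G.dist z y = i' := by
    have := aux_geodesic_dist hG.connected p hp (Nat.le_add_right i i') (by omega)
    rwa [Nat.add_sub_cancel_left] at this
  have dxy : G.dist x0 y = i + i' := by
    have := aux_geodesic_dist hG.connected p hp (Nat.zero_le (i + i')) (by omega)
    rwa [SimpleGraph.Walk.getVert_zero, Nat.sub_zero] at this
  have hcc := hG.card_c i (by omega) x0 z dxz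
  have hcb := hG.card_b i' (by omega) y z (by rw [SimpleGraph.dist_comm]; exact dzy)
  rw [← hcc, ← hcb]
  apply Finset.card_le_card
  intro w hw
  simp only [Finset.mem_filter, SimpleGraph.mem_neighborFinset] at hw ⊢
  obtain ⟨hadj, hdw⟩ := hw
  refine ⟨hadj, ?_⟩
  have h1 : G.dist y w ≤ G.dist y z + G.dist z w := hG.connected.dist_triangle
  have h2 : G.dist z w = 1 := SimpleGraph.dist_eq_one_iff_adj.mpr hadj
  have h3 : G.dist y z = i' := by rw [SimpleGraph.dist_comm]; exact dzy
  have h4 : G.dist x0 y ≤ G.dist x0 w + G.dist w y := hG.connected.dist_triangle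
  have h5 : G.dist w y = G.dist y w := SimpleGraph.dist_comm
  omega

/-- `c` is nondecreasing step: `c i ≤ c (i+1)` for `i + 1 ≤ D`. -/
lemma aux_c_step (hG : G.IsDRG D b c) {i : ℕ} (hi : i + 1 ≤ D) : c i ≤ c (i + 1) := by
  obtain ⟨x0, y0, hxy⟩ := hG.exists_dist_eq
  obtain ⟨p, hp⟩ := hG.connected.exists_walk_length_eq_dist x0 y0
  have hpl : p.length = D := by rw [hp, hxy]
  set x' := p.getVert 1 with hx'
  set y := p.getVert (i + 1) with hy
  have dxx' : G.dist x0 x' = 1 := by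
    have := aux_geodesic_dist hG.connected p hp (Nat.zero_le 1) (by omega)
    rwa [SimpleGraph.Walk.getVert_zero, Nat.sub_zero] at this
  have dx'y : G.dist x' y = i := by
    have := aux_geodesic_dist hG.connected p hp (by omega : 1 ≤ i + 1) (by omega)
    rwa [Nat.add_sub_cancel] at this
  have dxy : G.dist x0 y = i + 1 := by
    have := aux_geodesic_dist hG.connected p hp (Nat.zero_le (i + 1)) (by omega)
    rwa [SimpleGraph.Walk.getVert_zero, Nat.sub_zero] at this
  have hc1 := hG.card_c i (by omega) x' y dx'y
  have hc2 := hG.card_c (i + 1) hi x0 y dxy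
  rw [← hc1, ← hc2]
  apply Finset.card_le_card
  intro w hw
  simp only [Finset.mem_filter, SimpleGraph.mem_neighborFinset] at hw ⊢
  obtain ⟨hadj, hdw⟩ := hw
  refine ⟨hadj, ?_⟩
  have h1 : G.dist x0 w ≤ G.dist x0 x' + G.dist x' w := hG.connected.dist_triangle
  have h2 : G.dist x0 y ≤ G.dist x0 w + G.dist w y := hG.connected.dist_triangle
  have h3 : G.dist w y = 1 := SimpleGraph.dist_eq_one_iff_adj.mpr hadj.symm
  omega

/-- `b` is nonincreasing step: `b (i+1) ≤ b i` for `i + 1 ≤ D`. -/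
lemma aux_b_step (hG : G.IsDRG D b c) {i : ℕ} (hi : i + 1 ≤ D) : b (i + 1) ≤ b i := by
  obtain ⟨x0, y0, hxy⟩ := hG.exists_dist_eq
  obtain ⟨p, hp⟩ := hG.connected.exists_walk_length_eq_dist x0 y0
  have hpl : p.length = D := by rw [hp, hxy]
  set x' := p.getVert 1 with hx'
  set y := p.getVert (i + 1) with hy
  have dxx' : G.dist x0 x' = 1 := by
    have := aux_geodesic_dist hG.connected p hp (Nat.zero_le 1) (by omega)
    rwa [SimpleGraph.Walk.getVert_zero, Nat.sub_zero] at this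
  have dx'y : G.dist x' y = i := by
    have := aux_geodesic_dist hG.connected p hp (by omega : 1 ≤ i + 1) (by omega)
    rwa [Nat.add_sub_cancel] at this
  have dxy : G.dist x0 y = i + 1 := by
    have := aux_geodesic_dist hG.connected p hp (Nat.zero_le (i + 1)) (by omega)
    rwa [SimpleGraph.Walk.getVert_zero, Nat.sub_zero] at this
  have hb1 := hG.card_b (i + 1) hi x0 y dxy
  have hb2 := hG.card_b i (by omega) x' y dx'y
  rw [← hb1, ← hb2]
  apply Finset.card_le_card
  intro w hw
  simp only [Finset.mem_filter, SimpleGraph.mem_neighborFinset] at hw ⊢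
  obtain ⟨hadj, hdw⟩ := hw
  refine ⟨hadj, ?_⟩
  have h1 : G.dist x0 w ≤ G.dist x0 x' + G.dist x' w := hG.connected.dist_triangle
  have h2 : G.dist x' w ≤ G.dist x' y + G.dist y w := hG.connected.dist_triangle
  have h3 : G.dist y w = 1 := SimpleGraph.dist_eq_one_iff_adj.mpr hadj
  omega

lemma aux_c_mono (hG : G.IsDRG D b c) :
    ∀ m', m' ≤ D → ∀ m, m ≤ m' → c m ≤ c m' := by
  intro m'
  induction m' with
  | zero =>
    intro _ m hm
    have : m = 0 := by omega
    rw [this]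
  | succ k ih =>
    intro hk m hm
    rcases Nat.lt_or_ge m (k + 1) with hlt | hge
    · exact le_trans (ih (by omega) m (by omega)) (aux_c_step hG hk)
    · have : m = k + 1 := by omega
      rw [this]

lemma aux_b_anti (hG : G.IsDRG D b c) :
    ∀ m', m' ≤ D → ∀ m, m ≤ m' → b m' ≤ b m := by
  intro m'
  induction m' with
  | zero => intro _ m hm; have : m = 0 := by omega
            rw [this]
  | succ k ih =>
    intro hk m hm
    rcases Nat.lt_or_ge m (k + 1) with hlt | hge
    · exact le_trans (aux_b_step hG hk) (ih (by omega) m (by omega))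
    · have : m = k + 1 := by omega
      rw [this]

end Aux

theorem drg_diam_le_h_add_j {V : Type*} [Fintype V] [DecidableEq V] (G : SimpleGraph V) [DecidableRel G.Adj]
    (D : ℕ) (b c : ℕ → ℕ) (hG : G.IsDRG D b c)
    (hk : 3 ≤ b 0) (j h : ℕ)
    (hj1 : 1 ≤ j) (hj2 : b j ≤ c j) (hj3 : ∀ i : ℕ, 1 ≤ i → b i ≤ c i → j ≤ i)
    (hh1 : 1 ≤ h) (hh2 : b h < c h) (hh3 : ∀ i : ℕ, 1 ≤ i → b i < c i → h ≤ i) :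
    D ≤ h + j - 1 := by
  by_contra hcon
  push_neg at hcon
  have hD : h + j ≤ D := by omega
  have h1 : c h ≤ b (D - h) := aux_c_le_b hG (by omega)
  have h2 : b (D - h) ≤ b j := aux_b_anti hG (D - h) (by omega) j (by omega)
  have h4 : c j ≤ c (D - h) := aux_c_mono hG (D - h) (by omega) j (by omega)
  have h5 : c (D - h) ≤ b h := aux_c_le_b hG (by omega)
  omega
end

section
/- Let G be a strongly regular graph with parameters (v, k, λ, μ) of diameter 2 (i.e., connected and not complete), and assume G is not complete multipartite, i.e., μ < k. Then k − λ − 1 ≥ min{(5/16)·k, (2/(1+√2))·√k}. In particular, for each fixed value of b_1 = k − λ − 1 there are only finitely many connected, non-complete strongly regular graphs with connected complement having that value of b_1. -/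
open Finset SimpleGraph

set_option linter.unusedSectionVars false

variable {V : Type*} [Fintype V] [DecidableEq V]

private lemma cn_card (G : SimpleGraph V) [DecidableRel G.Adj] (x y : V) :
    #(G.neighborFinset x ∩ G.neighborFinset y) = Fintype.card (G.commonNeighbors x y) := by
  rw [← Set.toFinset_card]
  congr 1
  ext u
  simp [mem_commonNeighbors]

private lemma key3 {G : SimpleGraph V} [DecidableRel G.Adj] {n k l m : ℕ}
    (h : G.IsSRGWith n k l m) {x y : V} (hxy : x ≠ y) (hna : ¬G.Adj x y) (hm : 1 ≤ m) :
    2 * l + 2 ≤ k + m := by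
  have hcard : 0 < Fintype.card (G.commonNeighbors x y) := by
    rw [h.of_not_adj hxy hna]; omega
  obtain ⟨⟨z, hz⟩⟩ := Fintype.card_pos_iff.mp hcard
  rw [mem_commonNeighbors] at hz
  obtain ⟨hzx, hzy⟩ := hz
  set A := G.neighborFinset z ∩ G.neighborFinset x with hA
  set B := G.neighborFinset z ∩ G.neighborFinset y with hB
  have hAc : #A = l := by rw [hA, cn_card]; exact h.of_adj z x hzx.symm
  have hBc : #B = l := by rw [hB, cn_card]; exact h.of_adj z y hzy.symm
  have hABi : #(A ∩ B) ≤ m := by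
    have hsub : A ∩ B ⊆ G.neighborFinset x ∩ G.neighborFinset y := by
      intro u hu
      simp only [hA, hB, mem_inter] at hu ⊢
      exact ⟨hu.1.2, hu.2.2⟩
    calc #(A ∩ B) ≤ #(G.neighborFinset x ∩ G.neighborFinset y) := card_le_card hsub
    _ = m := by rw [cn_card]; exact h.of_not_adj hxy hna
  have hsub2 : insert x (insert y (A ∪ B)) ⊆ G.neighborFinset z := by
    intro u hu
    simp only [mem_insert, mem_union, hA, hB, mem_inter] at hu
    rcases hu with rfl | rfl | h' | h'
    · simpa using hzx.symm
    · simpa using hzy.symm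
    · exact h'.1
    · exact h'.1
  have hxns : x ∉ insert y (A ∪ B) := by
    intro hmem
    simp only [mem_insert, mem_union, hA, hB, mem_inter, mem_neighborFinset] at hmem
    rcases hmem with rfl | ⟨_, h2⟩ | ⟨_, h2⟩
    · exact hxy rfl
    · exact G.irrefl h2
    · exact hna h2.symm
  have hyns : y ∉ A ∪ B := by
    intro hmem
    simp only [mem_union, hA, hB, mem_inter, mem_neighborFinset] at hmem
    rcases hmem with ⟨_, h2⟩ | ⟨_, h2⟩
    · exact hna h2
    · exact G.irrefl h2
  have h1 : #(insert x (insert y (A ∪ B))) = #(A ∪ B) + 2 := by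
    rw [card_insert_of_notMem hxns, card_insert_of_notMem hyns]
  have h2 : #(insert x (insert y (A ∪ B))) ≤ k := by
    calc #(insert x (insert y (A ∪ B))) ≤ #(G.neighborFinset z) := card_le_card hsub2
    _ = k := by rw [card_neighborFinset_eq_degree]; exact h.regular z
  have h3 : #(A ∪ B) + #(A ∩ B) = #A + #B := card_union_add_card_inter A B
  omega

private lemma key4 {G : SimpleGraph V} [DecidableRel G.Adj] {n k l m : ℕ}
    (h : G.IsSRGWith n k l m) {x y : V} (hxy : x ≠ y) (hna : ¬G.Adj x y) :
    2 * k + 2 ≤ n + m := by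
  have hxu : x ∉ G.neighborFinset x ∪ G.neighborFinset y := by
    intro hmem
    rcases mem_union.mp hmem with h' | h'
    · exact G.notMem_neighborFinset_self x h'
    · rw [mem_neighborFinset] at h'
      exact hna h'.symm
  have hyu : y ∉ insert x (G.neighborFinset x ∪ G.neighborFinset y) := by
    intro hmem
    rcases mem_insert.mp hmem with rfl | hmem'
    · exact hxy rfl
    · rcases mem_union.mp hmem' with h' | h'
      · rw [mem_neighborFinset] at h'
        exact hna h'
      · exact G.notMem_neighborFinset_self y h'
  have hcard : #(insert y (insert x (G.neighborFinset x ∪ G.neighborFinset y)))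
      = #(G.neighborFinset x ∪ G.neighborFinset y) + 2 := by
    rw [card_insert_of_notMem hyu, card_insert_of_notMem hxu]
  have hle : #(insert y (insert x (G.neighborFinset x ∪ G.neighborFinset y))) ≤ n := by
    calc _ ≤ #(univ : Finset V) := card_le_card (subset_univ _)
    _ = n := by rw [card_univ, h.card]
  have hui : #(G.neighborFinset x ∪ G.neighborFinset y)
      + #(G.neighborFinset x ∩ G.neighborFinset y) = k + k := by
    rw [card_union_add_card_inter, card_neighborFinset_eq_degree, card_neighborFinset_eq_degree,
      h.regular x, h.regular y]
  have hmi : #(G.neighborFinset x ∩ G.neighborFinset y) = m := by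
    rw [cn_card]; exact h.of_not_adj hxy hna
  omega

private lemma exists_nonadj {G : SimpleGraph V} [DecidableRel G.Adj] {n k l m : ℕ}
    (h : G.IsSRGWith n k l m) (hn : k + 1 < n) : ∃ x y : V, x ≠ y ∧ ¬G.Adj x y := by
  have hpos : 0 < Fintype.card V := by rw [h.card]; omega
  obtain ⟨x⟩ := Fintype.card_pos_iff.mp hpos
  have hcard : #(insert x (G.neighborFinset x)) = k + 1 := by
    rw [card_insert_of_notMem (G.notMem_neighborFinset_self x),
      card_neighborFinset_eq_degree, h.regular x]
  obtain ⟨y, hy⟩ : ∃ y, y ∉ insert x (G.neighborFinset x) := by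
    by_contra hc
    push_neg at hc
    have := card_le_card (fun u _ => hc u : (univ : Finset V) ⊆ insert x (G.neighborFinset x))
    rw [hcard, card_univ, h.card] at this
    omega
  simp only [mem_insert, mem_neighborFinset] at hy
  push_neg at hy
  exact ⟨x, y, fun he => hy.1 he.symm, hy.2⟩

private lemma exists_adj {G : SimpleGraph V} [DecidableRel G.Adj] {n k l m : ℕ}
    (h : G.IsSRGWith n k l m) (hk : 1 ≤ k) (hn : 0 < n) : ∃ x y : V, G.Adj x y := by
  have hpos : 0 < Fintype.card V := by rw [h.card]; omega
  obtain ⟨x⟩ := Fintype.card_pos_iff.mp hpos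
  have hc : 0 < #(G.neighborFinset x) := by
    rw [card_neighborFinset_eq_degree, h.regular x]; omega
  obtain ⟨y, hy⟩ := card_pos.mp hc
  rw [mem_neighborFinset] at hy
  exact ⟨x, y, hy⟩

private lemma adj_of_walk {G : SimpleGraph V}
    (htr : ∀ a b c : V, G.Adj a b → G.Adj b c → a ≠ c → G.Adj a c) :
    ∀ {x y : V}, G.Walk x y → x ≠ y → G.Adj x y := by
  intro x y w
  induction w with
  | nil => intro hxy; exact absurd rfl hxy
  | @cons a b c hab p ih =>
      intro hxy
      by_cases hbc : b = c
      · subst hbc; exact hab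
      · exact htr a b c hab (ih hbc) hxy

private lemma eq_top_of_trans {G : SimpleGraph V} (hconn : G.Connected)
    (htr : ∀ a b c : V, G.Adj a b → G.Adj b c → a ≠ c → G.Adj a c) : G = ⊤ := by
  ext a c
  simp only [top_adj]
  constructor
  · exact fun h => h.ne
  · intro hac
    obtain ⟨w⟩ := hconn.preconnected a c
    exact adj_of_walk htr w hac

private lemma trans_of_mu_zero {G : SimpleGraph V} [DecidableRel G.Adj] {n k l : ℕ}
    (h : G.IsSRGWith n k l 0) :
    ∀ a b c : V, G.Adj a b → G.Adj b c → a ≠ c → G.Adj a c := by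
  intro a b c hab hbc hac
  by_contra hna
  have h0 := h.of_not_adj hac hna
  have hpos : 0 < Fintype.card (G.commonNeighbors a c) :=
    Fintype.card_pos_iff.mpr ⟨⟨b, (G.mem_commonNeighbors).mpr ⟨hab, hbc.symm⟩⟩⟩
  omega

private lemma trans_of_l {G : SimpleGraph V} [DecidableRel G.Adj] {n k l m : ℕ}
    (h : G.IsSRGWith n k l m) (hl : l + 1 = k) :
    ∀ a b c : V, G.Adj a b → G.Adj b c → a ≠ c → G.Adj a c := by
  intro a b c hab hbc hac
  have hS : #(G.neighborFinset a ∩ G.neighborFinset b) = l := by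
    rw [cn_card]; exact h.of_adj a b hab
  have hsub : G.neighborFinset a ∩ G.neighborFinset b ⊆ (G.neighborFinset b).erase a := by
    intro u hu
    rw [mem_inter] at hu
    rw [mem_erase]
    exact ⟨fun he => G.notMem_neighborFinset_self a (he ▸ hu.1), hu.2⟩
  have hT : #((G.neighborFinset b).erase a) = l := by
    rw [card_erase_of_mem (by rw [mem_neighborFinset]; exact hab.symm),
      card_neighborFinset_eq_degree, h.regular b]
    omega
  have heq : G.neighborFinset a ∩ G.neighborFinset b = (G.neighborFinset b).erase a :=
    eq_of_subset_of_card_le hsub (by rw [hS, hT])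
  have hc : c ∈ (G.neighborFinset b).erase a := by
    rw [mem_erase, mem_neighborFinset]
    exact ⟨Ne.symm hac, hbc⟩
  rw [← heq, mem_inter, mem_neighborFinset] at hc
  exact hc.1

private lemma arith (B C M K : ℤ) (hM : 1 ≤ M) (hC : 1 ≤ C) (hB : 1 ≤ B)
    (hK : K = M + C) (h1 : C ≤ 2*B) (h2 : M ≤ B*C) (h3 : (C+1)*M ≤ K*B) :
    5*K ≤ 16*B ∨ (3 ≤ B ∧ K ≤ B*B + B) := by
  by_cases hB2 : B ≤ 2
  · left
    interval_cases B <;> interval_cases C <;> omega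
  · right
    refine ⟨by omega, ?_⟩
    by_cases hCB : C ≤ B
    · nlinarith
    · push_neg at hCB
      have hfac2 : (0:ℤ) ≤ B*B - B - (C-B) - 1 := by
        nlinarith [mul_nonneg (show (0:ℤ) ≤ B - 3 by omega) (show (0:ℤ) ≤ B by omega)]
      have hfac : (0:ℤ) ≤ (C-B) * (B*B - B - (C-B) - 1) :=
        mul_nonneg (by omega) hfac2
      have key : C*(C+1) ≤ (B*B+B)*(C+1-B) := by nlinarith [hfac]
      have h5 : K*(C+1-B) ≤ C*(C+1) := by nlinarith [h3]
      have h6 : K*(C+1-B) ≤ (B*B+B)*(C+1-B) := le_trans h5 key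
      exact le_of_mul_le_mul_right h6 (by omega)

private lemma main_bound {G : SimpleGraph V} [DecidableRel G.Adj] {n k l m : ℕ}
    (h : G.IsSRGWith n k l m) (hm : 1 ≤ m) (hn : k + 1 < n) (hmk : m < k) :
    l + 2 ≤ k ∧
      (5 * k ≤ 16 * (k - l - 1) ∨ (3 ≤ k - l - 1 ∧ k ≤ (k-l-1)*(k-l-1) + (k-l-1))) ∧
      n ≤ k * (k - l - 1) + k + 1 := by
  have hn0 : 0 < n := by omega
  obtain ⟨x, y, hxy, hna⟩ := exists_nonadj h hn
  have F2 : 2 * l + 2 ≤ k + m := key3 h hxy hna hm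
  have hl2 : l + 2 ≤ k := by omega
  have F3 : 2 * k + 2 ≤ n + m := key4 h hxy hna
  have F4 : k * (k - l - 1) = (n - k - 1) * m := IsSRGWith.param_eq G h hn0
  have hcpl := h.compl
  have F6 : (n-k-1) * ((n-k-1) - (n-(2*k-m)-2) - 1) = (n - (n-k-1) - 1) * (n-(2*k-l)) :=
    IsSRGWith.param_eq Gᶜ hcpl hn0
  have e1 : (n-k-1) - (n-(2*k-m)-2) - 1 = k - m := by omega
  have e2 : n - (n-k-1) - 1 = k := by omega
  rw [e1, e2] at F6
  -- F6 : (n-k-1) * (k-m) = k * (n-(2*k-l))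
  have hmu' : 1 ≤ n - (2*k-l) := by
    rcases Nat.eq_zero_or_pos (n - (2*k-l)) with h0 | h0
    · exfalso
      rw [h0, Nat.mul_zero] at F6
      have : 0 < (n-k-1) * (k-m) := Nat.mul_pos (by omega) (by omega)
      omega
    · omega
  obtain ⟨p, q, hpq⟩ := exists_adj h (by omega) hn0
  have hpq' : p ≠ q := hpq.ne
  have hcna : ¬Gᶜ.Adj p q := by
    rw [compl_adj]
    push_neg
    intro _
    exact hpq
  have F7 : 2 * (n-(2*k-m)-2) + 2 ≤ (n-k-1) + (n-(2*k-l)) := key3 hcpl hpq' hcna hmu'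
  -- linear consequences
  have hcb : k - m ≤ 2 * (k - l - 1) := by omega
  have hbc2 : k - l - 1 ≤ 2 * (k - m) := by omega
  have hk'c : k - m + 1 ≤ n - k - 1 := by omega
  -- integer versions
  have zF4 : (k:ℤ) * ((k:ℕ) - l - 1 : ℕ) = ((n:ℕ) - k - 1 : ℕ) * m := by exact_mod_cast F4
  have zF6 : ((n:ℕ) - k - 1 : ℕ) * ((k:ℕ) - m : ℕ) = (k:ℤ) * ((n:ℕ) - (2*k-l) : ℕ) := by
    exact_mod_cast F6
  have hk0 : (0:ℤ) < (k:ℤ) := by exact_mod_cast (show 0 < k by omega)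
  have hprod : (k:ℤ) * (((k-l-1:ℕ):ℤ) * ((k-m:ℕ):ℤ))
      = (k:ℤ) * ((m:ℤ) * ((n-(2*k-l):ℕ):ℤ)) := by
    linear_combination ((k-m:ℕ):ℤ) * zF4 + (m:ℤ) * zF6
  have hbcEq : ((k-l-1:ℕ):ℤ) * ((k-m:ℕ):ℤ) = (m:ℤ) * ((n-(2*k-l):ℕ):ℤ) :=
    mul_left_cancel₀ hk0.ne' hprod
  have hMU1 : (1:ℤ) ≤ ((n-(2*k-l):ℕ):ℤ) := by exact_mod_cast hmu'
  have hm1 : (1:ℤ) ≤ (m:ℤ) := by exact_mod_cast hm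
  have hM : (m:ℤ) ≤ ((k-l-1:ℕ):ℤ) * ((k-m:ℕ):ℤ) := by nlinarith [hbcEq, hMU1, hm1]
  have hC1 : (1:ℤ) ≤ ((k-m:ℕ):ℤ) := by exact_mod_cast (show 1 ≤ k - m by omega)
  have hB1 : (1:ℤ) ≤ ((k-l-1:ℕ):ℤ) := by exact_mod_cast (show 1 ≤ k - l - 1 by omega)
  have hKeq : (k:ℤ) = (m:ℤ) + ((k-m:ℕ):ℤ) := by
    exact_mod_cast (show k = m + (k - m) by omega)
  have hCle : ((k-m:ℕ):ℤ) ≤ 2 * ((k-l-1:ℕ):ℤ) := by exact_mod_cast hcb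
  have hK'ge : ((k-m:ℕ):ℤ) + 1 ≤ ((n-k-1:ℕ):ℤ) := by exact_mod_cast hk'c
  have hVI : (((k-m:ℕ):ℤ) + 1) * (m:ℤ) ≤ (k:ℤ) * ((k-l-1:ℕ):ℤ) := by
    rw [zF4]
    exact mul_le_mul_of_nonneg_right hK'ge (by positivity)
  have hdisj := arith ((k-l-1:ℕ):ℤ) ((k-m:ℕ):ℤ) (m:ℤ) (k:ℤ) hm1 hC1 hB1 hKeq hCle hM hVI
  refine ⟨hl2, ?_, ?_⟩
  · rcases hdisj with hd | ⟨hd1, hd2⟩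
    · left; exact_mod_cast hd
    · right
      exact ⟨by exact_mod_cast hd1, by exact_mod_cast hd2⟩
  · have h1 : n - k - 1 ≤ (n - k - 1) * m := Nat.le_mul_of_pos_right _ (by omega)
    have h3 : n - k - 1 ≤ k * (k - l - 1) := by rw [F4]; exact h1
    have hn_eq : n = (n - k - 1) + k + 1 := by omega
    rw [hn_eq]
    exact Nat.add_le_add_right (Nat.add_le_add_right h3 k) 1

private lemma real_step {k l b : ℕ} (hb : b = k - l - 1) (hl : l + 2 ≤ k)
    (hdisj : 5*k ≤ 16*b ∨ (3 ≤ b ∧ k ≤ b*b + b)) :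
    min ((5 / 16 : ℝ) * k) (2 / (1 + Real.sqrt 2) * Real.sqrt k) ≤ (k:ℝ) - l - 1 := by
  have hbk : b + (l + 1) = k := by omega
  have hcast : (k:ℝ) - l - 1 = b := by
    have := congrArg (Nat.cast : ℕ → ℝ) hbk
    push_cast at this
    linarith
  rw [hcast]
  rcases hdisj with h | ⟨hb3, hk⟩
  · refine le_trans (min_le_left _ _) ?_
    have h' : (5:ℝ)*k ≤ 16*b := by exact_mod_cast h
    linarith
  · refine le_trans (min_le_right _ _) ?_
    have hs2 : Real.sqrt 2 ^ 2 = 2 := Real.sq_sqrt (by norm_num)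
    have hs2nn := Real.sqrt_nonneg (2:ℝ)
    have hs2a : (1.4:ℝ) ≤ Real.sqrt 2 := by nlinarith
    have hbpos : (3:ℝ) ≤ (b:ℝ) := by exact_mod_cast hb3
    have hkb : (k:ℝ) ≤ (b:ℝ)*(b:ℝ) + (b:ℝ) := by exact_mod_cast hk
    have hsk : Real.sqrt k ^ 2 = (k:ℝ) := Real.sq_sqrt (by positivity)
    have hsknn := Real.sqrt_nonneg (k:ℝ)
    have hpos : (0:ℝ) < 1 + Real.sqrt 2 := by linarith
    rw [div_mul_eq_mul_div, div_le_iff₀ hpos]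
    have hrnn : (0:ℝ) ≤ (b:ℝ) * (1 + Real.sqrt 2) := by positivity
    have key : (2 * Real.sqrt k) ^ 2 ≤ ((b:ℝ) * (1 + Real.sqrt 2)) ^ 2 := by
      nlinarith [mul_nonneg (show (0:ℝ) ≤ Real.sqrt 2 - 1.4 by linarith)
          (mul_nonneg (show (0:ℝ) ≤ (b:ℝ) by linarith) (show (0:ℝ) ≤ (b:ℝ) by linarith)),
        mul_nonneg (show (0:ℝ) ≤ (b:ℝ) - 3 by linarith) (show (0:ℝ) ≤ (b:ℝ) by linarith)]
    calc 2 * Real.sqrt k ≤ (b:ℝ) * (1 + Real.sqrt 2) :=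
          le_of_pow_le_pow_left₀ two_ne_zero hrnn key
    _ = _ := by ring

theorem srg_b1_lower_bound :
    (∀ (V : Type) [Fintype V] [DecidableEq V] (G : SimpleGraph V) [DecidableRel G.Adj]
        (v k l m : ℕ), G.IsSRGWith v k l m →
        1 ≤ m → k + 1 < v → m < k →
        min ((5 / 16 : ℝ) * k) (2 / (1 + Real.sqrt 2) * Real.sqrt k) ≤ (k : ℝ) - l - 1) ∧
      ∀ b1 : ℕ,
        {n : ℕ | ∃ (G : SimpleGraph (Fin n)) (_ : DecidableRel G.Adj) (k l m : ℕ),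
          G.IsSRGWith n k l m ∧ G.Connected ∧ G ≠ ⊤ ∧ Gᶜ.Connected ∧
            k - l - 1 = b1}.Finite := by
  constructor
  · intro V _ _ G _ v k l m h hm hv hmk
    obtain ⟨hl2, hdisj, _⟩ := main_bound h hm hv hmk
    exact real_step rfl hl2 hdisj
  · intro b1
    apply Set.Finite.subset (Set.finite_Iio ((b1*b1+16*b1)*(b1+1) + 2))
    rintro n ⟨G, _, k, l, m, hsrg, hconn, hne, hcc, hb1⟩
    simp only [Set.mem_Iio]
    have hnonadj : ∃ x y : Fin n, x ≠ y ∧ ¬G.Adj x y := by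
      by_contra hc
      push_neg at hc
      apply hne
      ext a b
      simp only [top_adj]
      exact ⟨fun h' => h'.ne, fun hab => hc a b hab⟩
    obtain ⟨x, y, hxy, hna⟩ := hnonadj
    have hm1 : 1 ≤ m := by
      rcases Nat.eq_zero_or_pos m with hm0 | hpos
      · exfalso
        subst hm0
        exact hne (eq_top_of_trans hconn (trans_of_mu_zero hsrg))
      · exact hpos
    have hcardV : Fintype.card (Fin n) = n := hsrg.card
    have hkn : k + 1 < n := by
      have hyx : y ∉ insert x (G.neighborFinset x) := by
        intro hmem
        rcases mem_insert.mp hmem with rfl | hmem'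
        · exact hxy rfl
        · rw [mem_neighborFinset] at hmem'
          exact hna hmem'
      have hcard : #(insert y (insert x (G.neighborFinset x))) = k + 2 := by
        rw [card_insert_of_notMem hyx,
          card_insert_of_notMem (G.notMem_neighborFinset_self x),
          card_neighborFinset_eq_degree, hsrg.regular x]
      have hle := card_le_card (subset_univ (insert y (insert x (G.neighborFinset x))))
      rw [hcard, card_univ, hcardV] at hle
      omega
    have hmlek : m ≤ k := by
      have h1 := hsrg.of_not_adj hxy hna
      have h2 := G.card_commonNeighbors_le_degree_left x y
      rw [h1, hsrg.regular x] at h2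
      exact h2
    have hmk : m < k := by
      rcases Nat.lt_or_ge m k with hlt | hge
      · exact hlt
      · exfalso
        have hmk2 : m = k := le_antisymm hmlek hge
        have hcpl := hsrg.compl
        have hl' : (n - (2*k - m) - 2) + 1 = n - k - 1 := by omega
        have hGc := eq_top_of_trans hcc (trans_of_l hcpl hl')
        obtain ⟨w⟩ := hconn.preconnected x y
        cases w with
        | nil => exact hxy rfl
        | cons hadj _ =>
            rename_i bb _
            have hcadj : Gᶜ.Adj x bb := by
              rw [hGc]
              simpa using hadj.ne
            rw [SimpleGraph.compl_adj] at hcadj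
            exact hcadj.2 hadj
    obtain ⟨hl2, hdisj, hnb⟩ := main_bound hsrg hm1 hkn hmk
    have hk : k ≤ (k - l - 1)*(k - l - 1) + 16*(k - l - 1) := by
      rcases hdisj with hd | ⟨_, hd⟩
      · calc k ≤ 16 * (k - l - 1) := by omega
        _ ≤ (k - l - 1)*(k - l - 1) + 16*(k - l - 1) := Nat.le_add_left _ _
      · calc k ≤ (k - l - 1)*(k - l - 1) + (k - l - 1) := hd
        _ ≤ (k - l - 1)*(k - l - 1) + 16*(k - l - 1) :=
            Nat.add_le_add_left (by omega) _
    rw [hb1] at hk hnb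
    -- hk : k ≤ b1*b1 + 16*b1, hnb : n ≤ k*b1 + k + 1
    have h4 : k * b1 ≤ (b1*b1 + 16*b1) * b1 := Nat.mul_le_mul_right b1 hk
    have h5 : n ≤ (b1*b1 + 16*b1) * b1 + (b1*b1 + 16*b1) + 1 := by
      calc n ≤ k * b1 + k + 1 := hnb
      _ ≤ (b1*b1 + 16*b1) * b1 + (b1*b1 + 16*b1) + 1 :=
          Nat.add_le_add_right (Nat.add_le_add h4 hk) 1
    have h6 : (b1*b1+16*b1)*(b1+1) = (b1*b1 + 16*b1) * b1 + (b1*b1 + 16*b1) := by ring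
    omega
end

section
/- Let G be a strongly regular graph with parameters (v, k, λ, μ) of diameter 2 (i.e., connected and not complete), and set C(k) = min{(5/16)·k, (2/(1+√2))·√k}. With φ_0 = v − 1 and φ_1 = (v − 1 − k)/(k − λ − 1), one has (φ_0 + φ_1)/φ_0 < 1 + 1/C(k). (Equivalently, the ratio of the electric resistance between vertices at distance 2 to that between adjacent vertices is less than 1 + 1/C(k).) -/
/-!
The identity `k (k - λ - 1) = (v - k - 1) μ` makes the ratio exactly `1 + 1 / (μ + k - λ - 1)`.
For a path `x ~ y ~ z` with `x ≁ z`, each common neighbour of `y` and `z` is either a common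
neighbour of `x` and `z` other than `y`, or a neighbour of `y` outside `N(x) ∪ {x, z}`; hence
`λ ≤ (μ - 1) + (k - λ - 2)`, so `μ + k - λ - 1 ≥ (k + μ + 1) / 2 > 5k/16 ≥ C(k)`.
-/

open Finset

namespace SimpleGraph

variable {V : Type*} [Fintype V] {G : SimpleGraph V} [DecidableRel G.Adj]

theorem card_neighborFinset_inter [DecidableEq V] (v w : V) :
    #(G.neighborFinset v ∩ G.neighborFinset w) = Fintype.card (G.commonNeighbors v w) := by
  rw [← Set.toFinset_card]
  congr 1
  ext u
  simp [mem_commonNeighbors]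

theorem card_neighborFinset_inter_add_three_le [DecidableEq V] {x y z : V} (hne : x ≠ z)
    (hxz : ¬G.Adj x z) (hxy : G.Adj x y) (hyz : G.Adj y z) :
    #(G.neighborFinset y ∩ G.neighborFinset z) + 3 ≤
      #(G.neighborFinset x ∩ G.neighborFinset z) + #(G.neighborFinset y \ G.neighborFinset x) := by
  have hsub : G.neighborFinset y ∩ G.neighborFinset z ⊆
      (G.neighborFinset x ∩ G.neighborFinset z).erase y ∪
        (G.neighborFinset y \ G.neighborFinset x) \ {x, z} := by
    intro s hs
    simp only [mem_inter, mem_neighborFinset] at hs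
    by_cases hxs : G.Adj x s
    · exact mem_union_left _ (by simp [hxs, hs.2, hs.1.ne'])
    · refine mem_union_right _ ?_
      simp only [mem_sdiff, mem_neighborFinset, mem_insert, mem_singleton, not_or]
      exact ⟨⟨hs.1, hxs⟩, fun h => hxz (h ▸ hs.2.symm), hs.2.ne'⟩
  have hpair_sub : {x, z} ⊆ G.neighborFinset y \ G.neighborFinset x := by
    simp [insert_subset_iff, hxy.symm, hyz, hxz]
  have hpair := card_sdiff_add_card_eq_card hpair_sub
  have herase := card_erase_add_one (s := G.neighborFinset x ∩ G.neighborFinset z) (a := y)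
    (by simp [hxy, hyz.symm])
  rw [card_pair hne] at hpair
  have := (card_le_card hsub).trans (card_union_le _ _)
  omega

theorem IsSRGWith.add_two_le {n k ℓ μ : ℕ} (h : G.IsSRGWith n k ℓ μ) (hμ : μ ≠ 0)
    (hn : k + 1 < n) : ℓ + 2 ≤ k := by
  have hpos : 0 < k * (k - ℓ - 1) :=
    h.param_eq G (by omega) ▸ Nat.mul_pos (by omega) (Nat.pos_of_ne_zero hμ)
  have := Nat.pos_of_mul_pos_left hpos
  omega

theorem IsSRGWith.two_mul_add_three_le {n k ℓ μ : ℕ} (h : G.IsSRGWith n k ℓ μ) (hμ : μ ≠ 0)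
    (hn : k + 1 < n) : 2 * ℓ + 3 ≤ k + μ := by
  classical
  obtain ⟨x⟩ : Nonempty V := Fintype.card_pos_iff.mp (by rw [h.card]; omega)
  obtain ⟨z, hxz⟩ : ∃ z, Gᶜ.Adj x z := by
    rw [← degree_pos_iff_exists_adj, h.compl_is_regular x]
    omega
  rw [compl_adj] at hxz
  obtain ⟨⟨y, hy⟩⟩ : Nonempty (G.commonNeighbors x z) := by
    rw [← Fintype.card_pos_iff, h.of_not_adj hxz.1 hxz.2]
    omega
  rw [mem_commonNeighbors] at hy
  have key := card_neighborFinset_inter_add_three_le hxz.1 hxz.2 hy.1 hy.2.symm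
  have hdeg := card_sdiff_add_card_inter (G.neighborFinset y) (G.neighborFinset x)
  simp only [card_neighborFinset_inter, card_neighborFinset_eq_degree, h.regular.degree_eq,
    h.of_adj _ _ hy.2.symm, h.of_adj _ _ hy.1.symm, h.of_not_adj hxz.1 hxz.2] at key hdeg
  omega

end SimpleGraph

theorem resistance_ratio_eq {v k l m : ℝ} (hB : k - l - 1 ≠ 0) (hv : v - 1 ≠ 0)
    (hmB : m + (k - l - 1) ≠ 0) (hparam : k * (k - l - 1) = (v - k - 1) * m) :
    (v - 1 + (v - 1 - k) / (k - l - 1)) / (v - 1) = 1 + 1 / (m + (k - l - 1)) := by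
  field_simp
  linear_combination -hparam

theorem srg_resistance_ratio_lt_general {V : Type*} [Fintype V] (G : SimpleGraph V)
    [DecidableRel G.Adj] (v k l m : ℕ) (hG : G.IsSRGWith v k l m)
    (hm : 1 ≤ m) (hkv : k + 1 < v) :
    ((v : ℝ) - 1 + ((v : ℝ) - 1 - k) / ((k : ℝ) - l - 1)) / ((v : ℝ) - 1) <
      1 + 1 / min ((5 / 16 : ℝ) * k) (2 / (1 + Real.sqrt 2) * Real.sqrt k) := by
  have hparam := hG.param_eq G (by omega)
  have hlk := hG.add_two_le (by omega) hkv
  have hkey := hG.two_mul_add_three_le (by omega) hkv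
  have hparamR : (k : ℝ) * (k - l - 1) = (v - k - 1) * m := by
    have := congrArg (Nat.cast (R := ℝ)) hparam
    push_cast [Nat.sub_sub, Nat.cast_sub (by omega : l + 1 ≤ k),
      Nat.cast_sub (by omega : k + 1 ≤ v)] at this
    linear_combination this
  have hlkR : (l : ℝ) + 2 ≤ k := by exact_mod_cast hlk
  have hkeyR : 2 * (l : ℝ) + 3 ≤ k + m := by exact_mod_cast hkey
  have hkvR : (k : ℝ) + 1 < v := by exact_mod_cast hkv
  rw [resistance_ratio_eq (by linarith) (by linarith) (by linarith) hparamR]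
  have hC : 0 < min ((5 / 16 : ℝ) * k) (2 / (1 + Real.sqrt 2) * Real.sqrt k) :=
    lt_min (by linarith) (by have := Real.sqrt_pos.mpr (by linarith : (0 : ℝ) < k); positivity)
  gcongr
  calc min ((5 / 16 : ℝ) * k) (2 / (1 + Real.sqrt 2) * Real.sqrt k) ≤ 5 / 16 * k := min_le_left _ _
    _ < m + (k - l - 1) := by linarith

theorem srg_resistance_ratio_lt {V : Type*} [Fintype V] [DecidableEq V] (G : SimpleGraph V)
    [DecidableRel G.Adj] (v k l m : ℕ) (hG : G.IsSRGWith v k l m)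
    (hm : 1 ≤ m) (hkv : k + 1 < v) :
    ((v : ℝ) - 1 + ((v : ℝ) - 1 - k) / ((k : ℝ) - l - 1)) / ((v : ℝ) - 1) <
      1 + 1 / min ((5 / 16 : ℝ) * k) (2 / (1 + Real.sqrt 2) * Real.sqrt k) :=
  srg_resistance_ratio_lt_general G v k l m hG hm hkv
end
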